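/- arXiv:2203.00900 — 3 statements merged into one kernel-verified Lean document; each statement's English description precedes it below -/
import Mathlib

section
/- Let M ≥ 1 be a natural number, let ε be a real number that is not an integer, and let x : Fin M → ℂ be arbitrary frequency-domain symbols. Define the time-domain samples x̃(n) = (1/M) ∑_{m=0}^{M-1} x(m)·exp(2πi·m·n/M) for n = 0,…,M−1, the frequency-offset received samples ỹ(n) = x̃(n)·exp(2πi·n·ε/M), and the DFT outputs y(s) = ∑_{n=0}^{M-1} ỹ(n)·exp(−2πi·n·s/M) for s = 0,…,M−1. Then for every s, y(s) = ∑_{m=0}^{M-1} I(m − s + ε)·x(m), where I(u) = (sin(πu) / (M·sin(πu/M))) · exp(iπ(1 − 1/M)·u). -/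
/-!
Substituting the inverse DFT and exchanging the two sums, the coefficient of `x m` becomes the
mean `(1/M) ∑_{n<M} qⁿ` of a geometric progression with ratio `q = exp(2πi u / M)`,
`u = m - s + ε`. Since `u` is not an integer, neither is `u / M`, so `q ≠ 1`, and the identity
`exp(2iθ) - 1 = 2i sin θ · exp(iθ)`, applied to numerator and denominator of `(q^M - 1)/(q - 1)`,
turns the mean into the kernel `I(u)`.
-/

open Complex Finset

lemma Complex.exp_two_mul_mul_I_sub_one (t : ℂ) :
    exp (2 * t * I) - 1 = 2 * I * sin t * exp (t * I) := by
  rw [sin, show 2 * t * I = t * I + t * I by ring, exp_add]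
  have hinv : exp (-t * I) * exp (t * I) = 1 := by rw [← exp_add]; simp
  linear_combination hinv - (exp (-t * I) * exp (t * I) - exp (t * I) ^ 2) * I_sq

lemma Complex.geom_sum_exp_two_mul_mul_I {θ : ℂ} (hθ : sin θ ≠ 0) (M : ℕ) :
    ∑ n ∈ range M, exp (2 * θ * I) ^ n = sin (M * θ) / sin θ * exp ((M - 1) * θ * I) := by
  have hq : exp (2 * θ * I) - 1 ≠ 0 := by
    rw [exp_two_mul_mul_I_sub_one]; simp [hθ, exp_ne_zero]
  have hpow : exp (2 * θ * I) ^ M = exp (2 * (M * θ) * I) := by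
    rw [← exp_nat_mul]; ring_nf
  have hshift : exp ((M - 1) * θ * I) * exp (θ * I) = exp (M * θ * I) := by
    rw [← exp_add]; ring_nf
  rw [geom_sum_eq (sub_ne_zero.mp hq), hpow, exp_two_mul_mul_I_sub_one,
    exp_two_mul_mul_I_sub_one, ← hshift]
  field_simp [exp_ne_zero, I_ne_zero]

lemma Real.sin_pi_mul_div_natCast_ne_zero {M : ℕ} (hM : M ≠ 0) {u : ℝ}
    (hu : ∀ k : ℤ, u ≠ k) : Real.sin (Real.pi * u / M) ≠ 0 := by
  rw [Ne, Real.sin_eq_zero_iff]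
  rintro ⟨k, hk⟩
  apply hu (k * M)
  field_simp at hk
  push_cast
  linarith

lemma one_div_mul_geom_sum_exp_eq_ici_kernel {M : ℕ} {u : ℝ}
    (hu : Real.sin (Real.pi * u / M) ≠ 0) :
    1 / (M : ℂ) * ∑ n ∈ range M, exp (2 * Real.pi * I * u / M) ^ n
      = (Real.sin (Real.pi * u) / ((M : ℝ) * Real.sin (Real.pi * u / M)) : ℂ)
          * exp (I * Real.pi * (1 - 1 / M) * u) := by
  have hM : (M : ℂ) ≠ 0 := by rintro h; simp_all
  have hθ : sin (Real.pi * u / M) ≠ 0 := by exact_mod_cast hu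
  rw [show 2 * Real.pi * I * u / M = 2 * (Real.pi * u / M : ℂ) * I by ring,
    geom_sum_exp_two_mul_mul_I hθ]
  push_cast
  rw [mul_div_cancel₀ _ hM]
  field_simp

theorem ofdm_dfo_ici_kernel_general (M : ℕ) (ε : ℝ) (hε : ¬ ∃ k : ℤ, ε = (k : ℝ))
    (x : Fin M → ℂ) (s : Fin M) :
    (∑ n : Fin M,
        (((1 : ℂ) / (M : ℂ)) *
            ∑ m : Fin M,
              x m * Complex.exp (2 * (Real.pi : ℂ) * Complex.I * ((m : ℕ) : ℂ)
                * ((n : ℕ) : ℂ) / (M : ℂ)))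
          * Complex.exp (2 * (Real.pi : ℂ) * Complex.I * ((n : ℕ) : ℂ) * (ε : ℂ) / (M : ℂ))
          * Complex.exp (-(2 * (Real.pi : ℂ) * Complex.I) * ((n : ℕ) : ℂ)
              * ((s : ℕ) : ℂ) / (M : ℂ)))
      = ∑ m : Fin M,
          (((Real.sin (Real.pi * (((m : ℕ) : ℝ) - ((s : ℕ) : ℝ) + ε)) /
                ((M : ℝ) * Real.sin (Real.pi * (((m : ℕ) : ℝ) - ((s : ℕ) : ℝ) + ε) / (M : ℝ)))) : ℂ)
              * Complex.exp (Complex.I * (Real.pi : ℂ) * (1 - 1 / (M : ℂ))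
                  * ((((m : ℕ) : ℝ) - ((s : ℕ) : ℝ) + ε : ℝ) : ℂ)))
            * x m := by
  set u : Fin M → ℝ := fun m => (m : ℕ) - (s : ℕ) + ε
  have hphase (m n : Fin M) :
      exp (2 * Real.pi * I * (m : ℕ) * (n : ℕ) / M) * exp (2 * Real.pi * I * (n : ℕ) * ε / M)
          * exp (-(2 * Real.pi * I) * (n : ℕ) * (s : ℕ) / M)
        = exp (2 * Real.pi * I * u m / M) ^ (n : ℕ) := by
    rw [← exp_add, ← exp_add, ← exp_nat_mul]
    push_cast [u]
    ring_nf
  have hu (m : Fin M) : Real.sin (Real.pi * u m / M) ≠ 0 := by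
    refine Real.sin_pi_mul_div_natCast_ne_zero m.pos.ne' fun k hk =>
      hε ⟨k - (m : ℕ) + (s : ℕ), ?_⟩
    push_cast
    linarith
  calc _ = ∑ m : Fin M,
        (1 / (M : ℂ) * ∑ n : Fin M, exp (2 * Real.pi * I * u m / M) ^ (n : ℕ)) * x m := by
        simp only [sum_mul, mul_sum]
        rw [sum_comm]
        refine sum_congr rfl fun m _ => sum_congr rfl fun n _ => ?_
        rw [← hphase]
        ring
    _ = _ := by
        refine sum_congr rfl fun m _ => ?_
        rw [Fin.sum_univ_eq_sum_range (fun n => exp (2 * Real.pi * I * u m / M) ^ n),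
          one_div_mul_geom_sum_exp_eq_ici_kernel (hu m)]

/-- **Lemma 1 of the paper, deterministic content.**
An OFDM symbol transmitted with a normalized Doppler frequency offset `ε` (not an integer)
produces, after the DFT, the inter-carrier interference kernel
`I(u) = (sin(πu) / (M sin(πu/M))) · exp(iπ(1 − 1/M) u)`:
for every output subcarrier `s`, `y(s) = ∑_m I(m − s + ε) · x(m)`. -/
theorem ofdm_dfo_ici_kernel (M : ℕ) (hM : 1 ≤ M) (ε : ℝ) (hε : ¬ ∃ k : ℤ, ε = (k : ℝ))
    (x : Fin M → ℂ) (s : Fin M) :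
    (∑ n : Fin M,
        (((1 : ℂ) / (M : ℂ)) *
            ∑ m : Fin M,
              x m * Complex.exp (2 * (Real.pi : ℂ) * Complex.I * ((m : ℕ) : ℂ)
                * ((n : ℕ) : ℂ) / (M : ℂ)))
          * Complex.exp (2 * (Real.pi : ℂ) * Complex.I * ((n : ℕ) : ℂ) * (ε : ℂ) / (M : ℂ))
          * Complex.exp (-(2 * (Real.pi : ℂ) * Complex.I) * ((n : ℕ) : ℂ)
              * ((s : ℕ) : ℂ) / (M : ℂ)))
      = ∑ m : Fin M,
          (((Real.sin (Real.pi * (((m : ℕ) : ℝ) - ((s : ℕ) : ℝ) + ε)) /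
                ((M : ℝ) * Real.sin (Real.pi * (((m : ℕ) : ℝ) - ((s : ℕ) : ℝ) + ε) / (M : ℝ)))) : ℂ)
              * Complex.exp (Complex.I * (Real.pi : ℂ) * (1 - 1 / (M : ℂ))
                  * ((((m : ℕ) : ℝ) - ((s : ℕ) : ℝ) + ε : ℝ) : ℂ)))
            * x m :=
  ofdm_dfo_ici_kernel_general M ε hε x s
end

section
/- Let n ≥ 1, let M be an n × n complex Hermitian positive definite matrix, and let b ∈ ℂⁿ with Re(bᴴ(M⁻¹.mulVec b)) < 1. Then (i) M − b bᴴ is Hermitian positive definite; (ii) for every a ∈ ℂⁿ with a ≠ 0, one has Re(aᴴ(M.mulVec a)) − |aᴴb|² > 0 and |aᴴb|² / (Re(aᴴ(M.mulVec a)) − |aᴴb|²) ≤ Re(bᴴ((M − b bᴴ)⁻¹.mulVec b)); (iii) equality holds in (ii) for a = M⁻¹.mulVec b when b ≠ 0; and (iv) Re(bᴴ((M − b bᴴ)⁻¹.mulVec b)) = Re(bᴴ(M⁻¹.mulVec b)) / (1 − Re(bᴴ(M⁻¹.mulVec b))). -/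
/-!
With `β = bᴴM⁻¹b`, Cauchy–Schwarz for the inner product `⟪x, y⟫ = xᴴMy`, applied to `a` and
`M⁻¹b`, gives `|aᴴb|² ≤ (aᴴMa) β`. Since `aᴴ(M - bbᴴ)a = aᴴMa - |aᴴb|²` and `β < 1`, this makes
`M - bbᴴ` positive definite and bounds the SINR of `a` by `β / (1 - β)`, with equality at
`a = M⁻¹b` where Cauchy–Schwarz is tight. By Sherman–Morrison, `(M - bbᴴ)⁻¹b = M⁻¹b / (1 - β)`,
so `bᴴ(M - bbᴴ)⁻¹b = β / (1 - β)` as well.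
-/

open Matrix
open scoped ComplexOrder

/-- Hermitian inner product `uᴴ v = ∑ i, conj (u i) * v i` on `ℂⁿ`. -/
noncomputable def herm {n : ℕ} (u v : Fin n → ℂ) : ℂ := ∑ i, star (u i) * v i

theorem herm_eq_star_dotProduct {n : ℕ} (u v : Fin n → ℂ) : herm u v = star u ⬝ᵥ v := rfl

namespace Matrix

theorem mulVec_nonsing_inv_mulVec {K m : Type*} [Field K] [Fintype m] [DecidableEq m]
    {M : Matrix m m K} (hM : IsUnit M.det) (x : m → K) : M *ᵥ (M⁻¹ *ᵥ x) = x := by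
  rw [mulVec_mulVec, mul_nonsing_inv _ hM, one_mulVec]

theorem inv_sub_vecMulVec_mulVec {K m : Type*} [Field K] [Fintype m] [DecidableEq m]
    {M : Matrix m m K} {u v : m → K} (hM : IsUnit M.det) (hN : IsUnit (M - vecMulVec u v).det)
    (h : v ⬝ᵥ (M⁻¹ *ᵥ u) ≠ 1) :
    (M - vecMulVec u v)⁻¹ *ᵥ u = (1 - v ⬝ᵥ (M⁻¹ *ᵥ u))⁻¹ • (M⁻¹ *ᵥ u) := by
  set y := M⁻¹ *ᵥ u
  have hsolve : (M - vecMulVec u v) *ᵥ ((1 - v ⬝ᵥ y)⁻¹ • y) = u := by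
    rw [mulVec_smul, sub_mulVec, mulVec_nonsing_inv_mulVec hM, vecMulVec_mulVec, op_smul_eq_smul]
    match_scalars
    field_simp [sub_ne_zero.mpr (Ne.symm h)]
  calc (M - vecMulVec u v)⁻¹ *ᵥ u
      = ((M - vecMulVec u v)⁻¹ * (M - vecMulVec u v)) *ᵥ ((1 - v ⬝ᵥ y)⁻¹ • y) := by
        rw [← mulVec_mulVec, hsolve]
    _ = (1 - v ⬝ᵥ y)⁻¹ • y := by rw [nonsing_inv_mul _ hN, one_mulVec]

variable {𝕜 : Type*} [RCLike 𝕜] {n : Type*} [Fintype n]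

open RCLike

theorem PosSemidef.norm_star_dotProduct_mulVec_sq_le {M : Matrix n n 𝕜} (hM : M.PosSemidef)
    (x y : n → 𝕜) :
    ‖star x ⬝ᵥ (M *ᵥ y)‖ ^ 2 ≤ re (star x ⬝ᵥ (M *ᵥ x)) * re (star y ⬝ᵥ (M *ᵥ y)) := by
  let := M.toSeminormedAddCommGroup hM
  let := M.toInnerProductSpace hM
  have hinner : ∀ x y : n → 𝕜, inner 𝕜 x y = star x ⬝ᵥ (M *ᵥ y) := fun _ _ => dotProduct_comm _ _
  have h := inner_mul_inner_self_le (𝕜 := 𝕜) x y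
  rwa [← norm_inner_symm x y, hinner, hinner, hinner, ← sq] at h

theorem PosDef.norm_star_dotProduct_sq_le [DecidableEq n] {M : Matrix n n 𝕜} (hM : M.PosDef)
    (a b : n → 𝕜) :
    ‖star a ⬝ᵥ b‖ ^ 2 ≤ re (star a ⬝ᵥ (M *ᵥ a)) * re (star b ⬝ᵥ (M⁻¹ *ᵥ b)) := by
  have h := hM.posSemidef.norm_star_dotProduct_mulVec_sq_le a (M⁻¹ *ᵥ b)
  rwa [mulVec_nonsing_inv_mulVec hM.det_pos.ne'.isUnit, star_dotProduct (M⁻¹ *ᵥ b), star_def,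
    conj_re] at h

theorem star_dotProduct_vecMulVec_star_mulVec (a b : n → 𝕜) :
    star a ⬝ᵥ (vecMulVec b (star b) *ᵥ a) = ((‖star a ⬝ᵥ b‖ ^ 2 : ℝ) : 𝕜) := by
  rw [vecMulVec_mulVec, op_smul_eq_smul, dotProduct_smul, smul_eq_mul, star_dotProduct b a]
  exact_mod_cast RCLike.conj_mul _

theorem IsHermitian.coe_re_star_dotProduct_mulVec {A : Matrix n n 𝕜} (hA : A.IsHermitian)
    (x : n → 𝕜) : (re (star x ⬝ᵥ (A *ᵥ x)) : 𝕜) = star x ⬝ᵥ (A *ᵥ x) :=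
  conj_eq_iff_re.mp (conj_eq_iff_im.mpr (hA.im_star_dotProduct_mulVec_self x))

variable [DecidableEq n] {M : Matrix n n 𝕜} {b : n → 𝕜}

theorem PosDef.re_dotProduct_sub_norm_sq_pos (hM : M.PosDef)
    (hb : re (star b ⬝ᵥ (M⁻¹ *ᵥ b)) < 1) {a : n → 𝕜} (ha : a ≠ 0) :
    0 < re (star a ⬝ᵥ (M *ᵥ a)) - ‖star a ⬝ᵥ b‖ ^ 2 := by
  nlinarith [hM.norm_star_dotProduct_sq_le a b, hM.re_dotProduct_pos ha]

theorem PosDef.sub_vecMulVec_star (hM : M.PosDef) (hb : re (star b ⬝ᵥ (M⁻¹ *ᵥ b)) < 1) :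
    (M - vecMulVec b (star b)).PosDef := by
  refine .of_dotProduct_mulVec_pos
    (hM.isHermitian.sub <| by
      simpa only [star_star] using (posSemidef_vecMulVec_star_self (star b)).isHermitian)
    fun a ha => ?_
  rw [sub_mulVec, dotProduct_sub, star_dotProduct_vecMulVec_star_mulVec,
    ← hM.isHermitian.coe_re_star_dotProduct_mulVec, ← ofReal_sub, ofReal_pos]
  exact hM.re_dotProduct_sub_norm_sq_pos hb ha

theorem PosDef.re_star_dotProduct_inv_sub_vecMulVec_mulVec (hM : M.PosDef)
    (hb : re (star b ⬝ᵥ (M⁻¹ *ᵥ b)) < 1) :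
    re (star b ⬝ᵥ ((M - vecMulVec b (star b))⁻¹ *ᵥ b))
      = re (star b ⬝ᵥ (M⁻¹ *ᵥ b)) / (1 - re (star b ⬝ᵥ (M⁻¹ *ᵥ b))) := by
  have hβ := hM.inv.isHermitian.coe_re_star_dotProduct_mulVec b
  have hne : star b ⬝ᵥ (M⁻¹ *ᵥ b) ≠ 1 := by
    rw [← hβ]
    exact_mod_cast hb.ne
  rw [inv_sub_vecMulVec_mulVec hM.det_pos.ne'.isUnit (hM.sub_vecMulVec_star hb).det_pos.ne'.isUnit
    hne, dotProduct_smul, smul_eq_mul, ← hβ]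
  norm_cast
  rw [div_eq_inv_mul]

noncomputable def effectiveSinr (M : Matrix n n 𝕜) (b a : n → 𝕜) : ℝ :=
  ‖star a ⬝ᵥ b‖ ^ 2 / (re (star a ⬝ᵥ (M *ᵥ a)) - ‖star a ⬝ᵥ b‖ ^ 2)

theorem PosDef.effectiveSinr_le (hM : M.PosDef) (hb : re (star b ⬝ᵥ (M⁻¹ *ᵥ b)) < 1)
    {a : n → 𝕜} (ha : a ≠ 0) :
    effectiveSinr M b a
      ≤ re (star b ⬝ᵥ (M⁻¹ *ᵥ b)) / (1 - re (star b ⬝ᵥ (M⁻¹ *ᵥ b))) := by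
  rw [effectiveSinr, div_le_div_iff₀ (hM.re_dotProduct_sub_norm_sq_pos hb ha) (by linarith)]
  nlinarith [hM.norm_star_dotProduct_sq_le a b]

theorem PosDef.effectiveSinr_inv_mulVec (hM : M.PosDef)
    (hb : re (star b ⬝ᵥ (M⁻¹ *ᵥ b)) < 1) (hb0 : b ≠ 0) :
    effectiveSinr M b (M⁻¹ *ᵥ b)
      = re (star b ⬝ᵥ (M⁻¹ *ᵥ b)) / (1 - re (star b ⬝ᵥ (M⁻¹ *ᵥ b))) := by
  have hβ := hM.inv.isHermitian.coe_re_star_dotProduct_mulVec b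
  have hβ_pos : 0 < re (star b ⬝ᵥ (M⁻¹ *ᵥ b)) := hM.inv.re_dotProduct_pos hb0
  set β := re (star b ⬝ᵥ (M⁻¹ *ᵥ b))
  rw [effectiveSinr, mulVec_nonsing_inv_mulVec hM.det_pos.ne'.isUnit, star_dotProduct, ← hβ,
    star_def, conj_ofReal, norm_ofReal, ofReal_re, sq_abs]
  field_simp [hβ_pos.ne', (by linarith : 1 - β ≠ 0)]

end Matrix

theorem lsfd_weight_optimum_general (n : ℕ)
    (M : Matrix (Fin n) (Fin n) ℂ) (hM : M.PosDef) (b : Fin n → ℂ)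
    (hb : (herm b (M⁻¹.mulVec b)).re < 1) :
    (M - vecMulVec b (star b)).PosDef ∧
    (∀ a : Fin n → ℂ, a ≠ 0 →
        0 < (herm a (M.mulVec a)).re - ‖herm a b‖ ^ 2 ∧
        ‖herm a b‖ ^ 2
            / ((herm a (M.mulVec a)).re - ‖herm a b‖ ^ 2)
          ≤ (herm b ((M - vecMulVec b (star b))⁻¹.mulVec b)).re) ∧
    (b ≠ 0 →
        ‖herm (M⁻¹.mulVec b) b‖ ^ 2
            / ((herm (M⁻¹.mulVec b) (M.mulVec (M⁻¹.mulVec b))).re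
                - ‖herm (M⁻¹.mulVec b) b‖ ^ 2)
          = (herm b ((M - vecMulVec b (star b))⁻¹.mulVec b)).re) ∧
    ((herm b ((M - vecMulVec b (star b))⁻¹.mulVec b)).re
        = (herm b (M⁻¹.mulVec b)).re / (1 - (herm b (M⁻¹.mulVec b)).re)) := by
  simp only [herm_eq_star_dotProduct] at hb ⊢
  have hvalue := hM.re_star_dotProduct_inv_sub_vecMulVec_mulVec hb
  refine ⟨hM.sub_vecMulVec_star hb, fun a ha => ⟨hM.re_dotProduct_sub_norm_sq_pos hb ha, ?_⟩,
    fun hb0 => ?_, hvalue⟩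
  · exact (hM.effectiveSinr_le hb ha).trans_eq hvalue.symm
  · exact (hM.effectiveSinr_inv_mulVec hb hb0).trans hvalue.symm

/-- **LSFD weight optimization.** For Hermitian positive definite `M` and
`b` with `Re(bᴴM⁻¹b) < 1`: (i) `M − b bᴴ` is positive definite; (ii) for every `a ≠ 0`
the effective SINR `|aᴴb|² / (Re(aᴴMa) − |aᴴb|²)` has positive denominator and is bounded
by `Re(bᴴ(M − b bᴴ)⁻¹ b)`; (iii) equality holds at `a = M⁻¹ b` when `b ≠ 0`; and
(iv) `Re(bᴴ(M − b bᴴ)⁻¹ b) = Re(bᴴM⁻¹b) / (1 − Re(bᴴM⁻¹b))`. -/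
theorem lsfd_weight_optimum (n : ℕ) (hn : 1 ≤ n)
    (M : Matrix (Fin n) (Fin n) ℂ) (hM : M.PosDef) (b : Fin n → ℂ)
    (hb : (herm b (M⁻¹.mulVec b)).re < 1) :
    (M - vecMulVec b (star b)).PosDef ∧
    (∀ a : Fin n → ℂ, a ≠ 0 →
        0 < (herm a (M.mulVec a)).re - ‖herm a b‖ ^ 2 ∧
        ‖herm a b‖ ^ 2
            / ((herm a (M.mulVec a)).re - ‖herm a b‖ ^ 2)
          ≤ (herm b ((M - vecMulVec b (star b))⁻¹.mulVec b)).re) ∧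
    (b ≠ 0 →
        ‖herm (M⁻¹.mulVec b) b‖ ^ 2
            / ((herm (M⁻¹.mulVec b) (M.mulVec (M⁻¹.mulVec b))).re
                - ‖herm (M⁻¹.mulVec b) b‖ ^ 2)
          = (herm b ((M - vecMulVec b (star b))⁻¹.mulVec b)).re) ∧
    ((herm b ((M - vecMulVec b (star b))⁻¹.mulVec b)).re
        = (herm b (M⁻¹.mulVec b)).re / (1 - (herm b (M⁻¹.mulVec b)).re)) :=
  lsfd_weight_optimum_general n M hM b hb
end

section
/- Let m₁ and m₂ be standard complex Gaussian vectors of dimension N on a probability space Ω whose 4N real coordinate variables are mutually independent. Let A, B be N × N complex matrices, set Q = A * Aᴴ and C = B * Bᴴ, and let h̄ ∈ ℂᴺ be deterministic. Define ĝ = h̄ + A.mulVec m₁ and h̃ = B.mulVec m₂. Then E[|ĝᴴh̃|²] = Re(tr(C * Q)) + Re(h̄ᴴ(C.mulVec h̄)). -/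
/-!
Expanding `|ĝᴴh̃|² = ∑ i j, conj ĝᵢ ĝⱼ h̃ᵢ conj h̃ⱼ` and using the independence of `ĝ` and `h̃`,
the expectation factors as `tr (E[ĝĝᴴ] E[h̃h̃ᴴ])`. A standard complex Gaussian vector `m` is
centred with `E[mmᴴ] = 1`, so `E[h̃h̃ᴴ] = BBᴴ = C` and `E[ĝĝᴴ] = h̄h̄ᴴ + AAᴴ = h̄h̄ᴴ + Q`, and
`tr (h̄h̄ᴴ C) = h̄ᴴCh̄`.
-/

open MeasureTheory ProbabilityTheory Matrix

/-- A family of jointly standard complex Gaussian vectors of dimension `N`, indexed by `ι`: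
all the real random variables `Re (m k · i)` and `Im (m k · i)`, for `k : ι` and `i : Fin N`,
are mutually independent and each has law `gaussianReal 0 (1/2)`. In particular each `m k`
is a standard complex Gaussian vector, and distinct vectors are independent. -/
def IsStdComplexGaussianFam {Ω : Type*} [MeasureSpace Ω] {ι : Type*} (N : ℕ)
    (m : ι → Ω → Fin N → ℂ) : Prop :=
  iIndepFun
      (fun q : ι × Fin N × Bool => fun ω =>
        if q.2.2 then (m q.1 ω q.2.1).re else (m q.1 ω q.2.1).im) volume ∧
  ∀ q : ι × Fin N × Bool,
    Measure.map (fun ω => if q.2.2 then (m q.1 ω q.2.1).re else (m q.1 ω q.2.1).im) volume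
      = gaussianReal 0 (1 / 2)

open ComplexConjugate
open scoped NNReal

section GaussianReal

variable {Ω : Type*} {mΩ : MeasurableSpace Ω} {μ : Measure Ω} {X : Ω → ℝ} {v : ℝ≥0}

lemma aemeasurable_of_map_eq_gaussianReal (hX : μ.map X = gaussianReal 0 v) :
    AEMeasurable X μ :=
  .of_map_ne_zero (hX ▸ IsProbabilityMeasure.ne_zero _)

lemma memLp_of_map_eq_gaussianReal (hX : μ.map X = gaussianReal 0 v) (p : ℝ≥0) :
    MemLp X p μ := by
  rw [← Function.id_comp X, ← memLp_map_measure_iff (by fun_prop)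
    (aemeasurable_of_map_eq_gaussianReal hX), hX]
  exact memLp_id_gaussianReal p

lemma integral_eq_zero_of_map_eq_gaussianReal (hX : μ.map X = gaussianReal 0 v) :
    ∫ ω, X ω ∂μ = 0 := by
  rw [← integral_id_gaussianReal (μ := 0) (v := v), ← hX,
    integral_map (aemeasurable_of_map_eq_gaussianReal hX) (by fun_prop)]

lemma integral_sq_of_map_eq_gaussianReal (hX : μ.map X = gaussianReal 0 v) :
    ∫ ω, X ω ^ 2 ∂μ = v := by
  have hXm := aemeasurable_of_map_eq_gaussianReal hX
  rw [← variance_of_integral_eq_zero hXm (integral_eq_zero_of_map_eq_gaussianReal hX),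
    ← Function.id_comp X, ← variance_map aemeasurable_id hXm, hX]
  exact variance_id_gaussianReal

lemma ProbabilityTheory.iIndepFun.integral_mul_of_map_eq_gaussianReal {ι : Type*}
    [DecidableEq ι] {X : ι → Ω → ℝ} (hind : iIndepFun X μ)
    (hX : ∀ i, μ.map (X i) = gaussianReal 0 v) (i j : ι) :
    ∫ ω, X i ω * X j ω ∂μ = if i = j then (v : ℝ) else 0 := by
  split_ifs with hij
  · subst hij
    simpa only [sq] using integral_sq_of_map_eq_gaussianReal (hX i)
  · rw [(hind.indepFun hij).integral_fun_mul_eq_mul_integral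
      (memLp_of_map_eq_gaussianReal (hX i) 1).1 (memLp_of_map_eq_gaussianReal (hX j) 1).1,
      integral_eq_zero_of_map_eq_gaussianReal (hX i), zero_mul]

end GaussianReal

section SecondMoment

variable {Ω n : Type*} {mΩ : MeasurableSpace Ω} {μ : Measure Ω} {X : Ω → n → ℂ}

noncomputable def secondMoment (μ : Measure Ω) (X : Ω → n → ℂ) : Matrix n n ℂ :=
  Matrix.of fun i j => ∫ ω, X ω i * conj (X ω j) ∂μ

lemma integrable_mul_conj (hX : ∀ i, MemLp (fun ω => X ω i) 2 μ) (i j : n) :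
    Integrable (fun ω => X ω i * conj (X ω j)) μ :=
  (hX i).integrable_mul (hX j).star

lemma secondMoment_const_add [IsProbabilityMeasure μ] (c : n → ℂ)
    (hX : ∀ i, MemLp (fun ω => X ω i) 2 μ) (hmean : ∀ i, ∫ ω, X ω i ∂μ = 0) :
    secondMoment μ (fun ω => c + X ω) = vecMulVec c (star c) + secondMoment μ X := by
  ext i j
  have hexpand : ∀ ω, (c + X ω) i * conj ((c + X ω) j)
      = c i * conj (c j) + (c i * conj (X ω j) + X ω i * conj (c j))
        + X ω i * conj (X ω j) := by
    intro ω
    simp only [Pi.add_apply, map_add]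
    ring
  have hleft : Integrable (fun ω => c i * conj (X ω j)) μ :=
    ((hX j).star.integrable one_le_two).const_mul _
  have hright : Integrable (fun ω => X ω i * conj (c j)) μ :=
    ((hX i).integrable one_le_two).mul_const _
  have hcross : ∫ ω, c i * conj (X ω j) + X ω i * conj (c j) ∂μ = 0 := by
    rw [integral_add hleft hright, integral_const_mul, integral_mul_const, integral_conj,
      hmean, hmean]
    simp
  simp only [secondMoment, of_apply, hexpand, Matrix.add_apply, vecMulVec_apply, Pi.star_apply,
    RCLike.star_def]
  rw [integral_add ((integrable_const _).fun_add (hleft.fun_add hright))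
      (integrable_mul_conj hX i j),
    integral_add (integrable_const _) (hleft.fun_add hright), hcross]
  simp

variable [Fintype n]

lemma memLp_mulVec {l : Type*} (A : Matrix l n ℂ) {p : ENNReal}
    (hX : ∀ i, MemLp (fun ω => X ω i) p μ) (i : l) :
    MemLp (fun ω => (A *ᵥ X ω) i) p μ :=
  memLp_finsetSum _ fun k _ => (hX k).const_mul (A i k)

lemma integral_mulVec {l : Type*} (A : Matrix l n ℂ)
    (hX : ∀ i, Integrable (fun ω => X ω i) μ) (i : l) :
    ∫ ω, (A *ᵥ X ω) i ∂μ = (A *ᵥ fun k => ∫ ω, X ω k ∂μ) i := by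
  simp only [mulVec, dotProduct]
  rw [integral_finsetSum _ fun k _ => (hX k).const_mul (A i k)]
  simp_rw [integral_const_mul]

lemma secondMoment_mulVec {l : Type*} (A : Matrix l n ℂ)
    (hX : ∀ i, MemLp (fun ω => X ω i) 2 μ) :
    secondMoment μ (fun ω => A *ᵥ X ω) = A * secondMoment μ X * Aᴴ := by
  ext i j
  have hexpand : ∀ ω, (A *ᵥ X ω) i * conj ((A *ᵥ X ω) j)
      = ∑ k, ∑ k', (A i k * conj (A j k')) * (X ω k * conj (X ω k')) := by
    intro ω
    simp only [mulVec, dotProduct, map_sum, Finset.sum_mul_sum, map_mul]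
    exact Finset.sum_congr rfl fun k _ => Finset.sum_congr rfl fun k' _ => by ring
  have hint : ∀ k k', Integrable
      (fun ω => (A i k * conj (A j k')) * (X ω k * conj (X ω k'))) μ := fun k k' =>
    (integrable_mul_conj hX k k').const_mul _
  simp only [secondMoment, of_apply, hexpand, mul_apply, conjTranspose_apply, RCLike.star_def]
  rw [integral_finsetSum _ fun k _ => integrable_finsetSum _ fun k' _ => hint k k']
  simp_rw [integral_finsetSum _ fun k' _ => hint _ k', integral_const_mul, Finset.sum_mul]
  rw [Finset.sum_comm]
  exact Finset.sum_congr rfl fun k _ => Finset.sum_congr rfl fun k' _ => by ring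

theorem ProbabilityTheory.IndepFun.integral_norm_sum_star_mul_sq {Y : Ω → n → ℂ}
    (hXY : IndepFun X Y μ) (hXm : AEMeasurable X μ) (hYm : AEMeasurable Y μ)
    (hX : ∀ i, MemLp (fun ω => X ω i) 2 μ) (hY : ∀ i, MemLp (fun ω => Y ω i) 2 μ) :
    ∫ ω, ‖∑ i, star (X ω i) * Y ω i‖ ^ 2 ∂μ
      = (secondMoment μ X * secondMoment μ Y).trace.re := by
  have hexpand : ∀ ω, ((‖∑ i, star (X ω i) * Y ω i‖ ^ 2 : ℝ) : ℂ)
      = ∑ i, ∑ j, (X ω j * conj (X ω i)) * (Y ω i * conj (Y ω j)) := by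
    intro ω
    rw [Complex.sq_norm, ← Complex.mul_conj, map_sum, Finset.sum_mul_sum]
    refine Finset.sum_congr rfl fun i _ => Finset.sum_congr rfl fun j _ => ?_
    simp only [RCLike.star_def, map_mul, Complex.conj_conj]
    ring
  have hmeas : ∀ i j : n, Measurable fun x : n → ℂ => x i * conj (x j) := by
    intro i j
    fun_prop
  have hint : ∀ i j, Integrable
      (fun ω => (X ω j * conj (X ω i)) * (Y ω i * conj (Y ω j))) μ := fun i j =>
    (hXY.comp (hmeas j i) (hmeas i j)).integrable_mul (integrable_mul_conj hX j i)
      (integrable_mul_conj hY i j)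
  calc ∫ ω, ‖∑ i, star (X ω i) * Y ω i‖ ^ 2 ∂μ
      = (∫ ω, ∑ i, ∑ j, (X ω j * conj (X ω i)) * (Y ω i * conj (Y ω j)) ∂μ).re := by
        simp_rw [← hexpand, integral_complex_ofReal, Complex.ofReal_re]
    _ = (∑ i, ∑ j, secondMoment μ X j i * secondMoment μ Y i j).re := by
        rw [integral_finsetSum _ fun i _ => integrable_finsetSum _ fun j _ => hint i j]
        simp_rw [integral_finsetSum _ fun j _ => hint _ j]
        congr 1
        refine Finset.sum_congr rfl fun i _ => Finset.sum_congr rfl fun j _ => ?_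
        exact hXY.integral_fun_comp_mul_comp hXm hYm (hmeas j i).aestronglyMeasurable
          (hmeas i j).aestronglyMeasurable
    _ = (secondMoment μ X * secondMoment μ Y).trace.re := by
        rw [Finset.sum_comm]
        rfl

end SecondMoment

namespace IsStdComplexGaussianFam

variable {Ω ι : Type*} [MeasureSpace Ω] {N : ℕ} {m : ι → Ω → Fin N → ℂ}

lemma map_re (hm : IsStdComplexGaussianFam N m) (k : ι) (i : Fin N) :
    volume.map (fun ω => (m k ω i).re) = gaussianReal 0 (1 / 2) :=
  hm.2 (k, i, true)

lemma map_im (hm : IsStdComplexGaussianFam N m) (k : ι) (i : Fin N) :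
    volume.map (fun ω => (m k ω i).im) = gaussianReal 0 (1 / 2) :=
  hm.2 (k, i, false)

lemma memLp (hm : IsStdComplexGaussianFam N m) (k : ι) (i : Fin N) (p : ℝ≥0) :
    MemLp (fun ω => m k ω i) p volume :=
  memLp_re_im_iff.1 ⟨memLp_of_map_eq_gaussianReal (hm.map_re k i) p,
    memLp_of_map_eq_gaussianReal (hm.map_im k i) p⟩

lemma aemeasurable (hm : IsStdComplexGaussianFam N m) (k : ι) : AEMeasurable (m k) volume :=
  aemeasurable_pi_lambda _ fun i => (hm.memLp k i 1).aestronglyMeasurable.aemeasurable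

lemma integral_eq_zero (hm : IsStdComplexGaussianFam N m) (k : ι) (i : Fin N) :
    ∫ ω, m k ω i = 0 := by
  have hint := memLp_one_iff_integrable.1 (hm.memLp k i 1)
  apply Complex.ext
  · rw [← RCLike.re_to_complex, ← integral_re hint]
    exact integral_eq_zero_of_map_eq_gaussianReal (hm.map_re k i)
  · rw [← RCLike.im_to_complex, ← integral_im hint]
    exact integral_eq_zero_of_map_eq_gaussianReal (hm.map_im k i)

lemma secondMoment_eq_one (hm : IsStdComplexGaussianFam N m) (k : ι) :
    secondMoment volume (m k) = 1 := by
  classical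
  ext i j
  have hmom := iIndepFun.integral_mul_of_map_eq_gaussianReal hm.1 hm.2
  have hrr := hmom (k, i, true) (k, j, true)
  have hii := hmom (k, i, false) (k, j, false)
  have hir := hmom (k, i, false) (k, j, true)
  have hri := hmom (k, i, true) (k, j, false)
  simp only [Prod.mk.injEq, true_and, and_true, if_true, if_false, Bool.false_eq_true,
    Bool.true_eq_false, and_false] at hrr hii hir hri
  have hre : ∀ i, MemLp (fun ω => (m k ω i).re) 2 volume := fun i =>
    memLp_of_map_eq_gaussianReal (hm.map_re k i) 2
  have him : ∀ i, MemLp (fun ω => (m k ω i).im) 2 volume := fun i =>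
    memLp_of_map_eq_gaussianReal (hm.map_im k i) 2
  have hprod : ∀ f g : Ω → ℝ, MemLp f 2 volume → MemLp g 2 volume →
      Integrable (fun ω => f ω * g ω) volume := fun f g hf hg => hf.integrable_mul hg
  have hint := integrable_mul_conj (fun i => hm.memLp k i 2) i j
  rw [one_apply]
  change ∫ ω, m k ω i * conj (m k ω j) = _
  apply Complex.ext
  · rw [← RCLike.re_to_complex, ← integral_re hint]
    simp only [RCLike.re_to_complex, Complex.mul_re, Complex.conj_re, Complex.conj_im, mul_neg,
      sub_neg_eq_add]
    rw [integral_add (hprod _ _ (hre i) (hre j)) (hprod _ _ (him i) (him j)), hrr, hii]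
    split_ifs <;> norm_num
  · rw [← RCLike.im_to_complex, ← integral_im hint]
    simp only [RCLike.im_to_complex, Complex.mul_im, Complex.conj_re, Complex.conj_im, mul_neg,
      neg_add_eq_sub]
    rw [integral_sub (hprod _ _ (him i) (hre j)) (hprod _ _ (hre i) (him j)), hri, hir]
    split_ifs <;> simp

lemma indepFun (hm : IsStdComplexGaussianFam N m) {k k' : ι} (hkk' : k ≠ k') :
    IndepFun (m k) (m k') volume := by
  classical
  let S : ι → Finset (ι × Fin N × Bool) := fun k => {k} ×ˢ Finset.univ
  have hS : ∀ k i b, (k, i, b) ∈ S k := by simp [S]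
  let assemble : ∀ k, (S k → ℝ) → Fin N → ℂ := fun k p i =>
    ⟨p ⟨(k, i, true), hS k i true⟩, p ⟨(k, i, false), hS k i false⟩⟩
  have hassemble : ∀ k, Measurable (assemble k) := by
    refine fun k => measurable_pi_lambda _ fun i => ?_
    change Measurable (Complex.measurableEquivRealProd.symm ∘
      fun p : S k → ℝ => (p ⟨(k, i, true), hS k i true⟩, p ⟨(k, i, false), hS k i false⟩))
    exact Complex.measurableEquivRealProd.symm.measurable.comp (by fun_prop)
  have hdisj : Disjoint (S k) (S k') :=
    Finset.disjoint_product.2 (Or.inl (Finset.disjoint_singleton.2 hkk'))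
  -- By eta for `ℂ`, `m k` is definitionally `assemble k` of the real coordinates indexed by `S k`.
  exact ((iIndepFun.indepFun_finset₀ (S k) (S k') hdisj hm.1 fun q =>
    aemeasurable_of_map_eq_gaussianReal (hm.2 q)).comp (hassemble k) (hassemble k'))

end IsStdComplexGaussianFam

/-- **estimation-error cross term, eq. (52) of the paper.** With MMSE channel
estimate `ĝ = h̄ + A m₁` (covariance `Q = A Aᴴ`) and independent estimation error
`h̃ = B m₂` (covariance `C = B Bᴴ`),
`E[|ĝᴴ h̃|²] = Re tr(C Q) + Re h̄ᴴCh̄`. -/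
theorem estimation_error_cross_moment
    {Ω : Type*} [MeasureSpace Ω] [IsProbabilityMeasure (volume : Measure Ω)]
    (N : ℕ) (m₁ m₂ : Ω → Fin N → ℂ)
    (hm : IsStdComplexGaussianFam N (fun b : Bool => if b then m₁ else m₂))
    (A B : Matrix (Fin N) (Fin N) ℂ) (Q C : Matrix (Fin N) (Fin N) ℂ)
    (hQ : Q = A * A.conjTranspose) (hC : C = B * B.conjTranspose)
    (hbar : Fin N → ℂ) :
    (∫ ω, ‖∑ i, star ((hbar + A.mulVec (m₁ ω)) i) * B.mulVec (m₂ ω) i‖ ^ 2)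
      = (C * Q).trace.re + (∑ i, star (hbar i) * C.mulVec hbar i).re := by
  subst hQ hC
  have hind : IndepFun m₁ m₂ volume := hm.indepFun (k := true) (k' := false) (by decide)
  have hX₁ : ∀ i, MemLp (fun ω => m₁ ω i) 2 volume := fun i => hm.memLp true i 2
  have hX₂ : ∀ i, MemLp (fun ω => m₂ ω i) 2 volume := fun i => hm.memLp false i 2
  have hS₁ : secondMoment volume m₁ = 1 := hm.secondMoment_eq_one true
  have hS₂ : secondMoment volume m₂ = 1 := hm.secondMoment_eq_one false
  have hmean : ∀ i, ∫ ω, (A *ᵥ m₁ ω) i = 0 := fun i => by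
    have hzero : (fun k => ∫ ω, m₁ ω k) = 0 := funext (hm.integral_eq_zero true)
    rw [integral_mulVec A (fun k => (hX₁ k).integrable one_le_two), hzero, mulVec_zero]
    rfl
  have hg : Measurable fun v : Fin N → ℂ => hbar + A *ᵥ v := by fun_prop
  have hw : Measurable fun v : Fin N → ℂ => B *ᵥ v := by fun_prop
  have hXY : IndepFun (fun ω => hbar + A *ᵥ m₁ ω) (fun ω => B *ᵥ m₂ ω) volume :=
    hind.comp hg hw
  rw [hXY.integral_norm_sum_star_mul_sq (hg.comp_aemeasurable (hm.aemeasurable true))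
      (hw.comp_aemeasurable (hm.aemeasurable false))
      (fun i => (memLp_const (hbar i)).add (memLp_mulVec A hX₁ i)) (memLp_mulVec B hX₂),
    secondMoment_const_add hbar (memLp_mulVec A hX₁) hmean, secondMoment_mulVec A hX₁,
    secondMoment_mulVec B hX₂, hS₁, hS₂, mul_one, mul_one, add_mul, trace_add, Complex.add_re,
    vecMulVec_mul, trace_vecMulVec, dotProduct_comm, ← dotProduct_mulVec, trace_mul_comm]
  exact add_comm _ _
end
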